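/- arXiv:2102.02979 — 2 statements merged into one kernel-verified Lean document; each statement's English description precedes it below -/
import Mathlib

section
/- For probability measures μ, ν on {0,...,N-1} (N even), 𝔽(μ,ν) ≤ (π/√3)·√(KL(μ||ν)), where KL is the Kullback-Leibler divergence. -/
open Finset

/-- Discrete Fourier transform of a real vector, at integer frequency `k`. -/
noncomputable def dft (N : ℕ) (f : Fin N → ℝ) (k : ℤ) : ℂ :=
  ∑ j : Fin N, (f j : ℂ) * Complex.exp (-2 * Real.pi * Complex.I * ((j : ℕ) : ℂ) * (k : ℂ) / (N : ℂ))

/-- Squared Fourier Discrepancy between two vectors. -/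
noncomputable def F2 (N : ℕ) (μ ν : Fin N → ℝ) : ℝ :=
  (∑ k ∈ Finset.Icc 1 (N / 2 - 1), ‖dft N μ (k : ℤ) - dft N ν (k : ℤ)‖ ^ 2 / (k : ℝ) ^ 2)
    + ‖dft N μ ((N : ℤ) / 2) - dft N ν ((N : ℤ) / 2)‖ ^ 2 / (N : ℝ) ^ 2

/-- Fourier Discrepancy. -/
noncomputable def FD (N : ℕ) (μ ν : Fin N → ℝ) : ℝ := Real.sqrt (F2 N μ ν)

/-- Total variation distance. -/
noncomputable def TV (N : ℕ) (μ ν : Fin N → ℝ) : ℝ := (1 / 2) * ∑ i : Fin N, |μ i - ν i|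

/-- A probability vector. -/
def IsProb (N : ℕ) (μ : Fin N → ℝ) : Prop := (∀ i, 0 ≤ μ i) ∧ ∑ i : Fin N, μ i = 1

/-- Kullback-Leibler divergence of two probability vectors (finite case,
with the convention `0 * log 0 = 0`). -/
noncomputable def KL (N : ℕ) (μ ν : Fin N → ℝ) : ℝ :=
  ∑ x : Fin N, μ x * Real.log (μ x / ν x)

/-!
Every Fourier coefficient of `μ - ν` has modulus at most `‖μ - ν‖₁`, so by the Basel sum
`𝔽²(μ, ν) ≤ ‖μ - ν‖₁² (∑_{k < N/2} 1/k² + 1/N²) ≤ ‖μ - ν‖₁² π²/6`, and Pinsker's inequality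
`‖μ - ν‖₁² ≤ 2 KL(μ‖ν)` gives the claim. Pinsker follows from the scalar bound
`3 (t - 1)² ≤ (2t + 4) (t log t - t + 1)` for `t ≥ 0` (the difference is convex and vanishes to
second order at `t = 1`) applied to `t = μᵢ/νᵢ`, and Cauchy–Schwarz against the weights
`(2μᵢ + 4νᵢ)/3`, which sum to `2`.
-/

open Real InformationTheory

lemma three_mul_sq_sub_one_le_mul_klFun {t : ℝ} (ht : 0 ≤ t) :
    3 * (t - 1) ^ 2 ≤ (2 * t + 4) * klFun t := by
  set g : ℝ → ℝ := fun t => (2 * t + 4) * klFun t - 3 * (t - 1) ^ 2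
  set g' : ℝ → ℝ := fun t => 2 * klFun t + (2 * t + 4) * log t - 6 * (t - 1)
  have hg' : ∀ x ≠ 0, HasDerivAt g (g' x) x := fun x hx =>
    ((((hasDerivAt_id x).const_mul 2).add_const 4).mul (hasDerivAt_klFun hx)
      |>.sub ((((hasDerivAt_id x).sub_const 1).pow 2).const_mul 3)).congr_deriv
        (by simp [g']; ring)
  have hg'' : ∀ x ≠ 0, HasDerivAt g' (4 * (log x + x⁻¹ - 1)) x := fun x hx =>
    ((((hasDerivAt_klFun hx).const_mul 2).add
      ((((hasDerivAt_id x).const_mul 2).add_const 4).mul (hasDerivAt_log hx))).sub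
      (((hasDerivAt_id x).sub_const 1).const_mul 6)).congr_deriv
        (by simp only [id]; field_simp; ring)
  have hconv : ConvexOn ℝ (Set.Ici 0) g := by
    refine convexOn_of_hasDerivWithinAt2_nonneg (f' := g') (f'' := fun x => 4 * (log x + x⁻¹ - 1))
      (convex_Ici 0) (by fun_prop) ?_ ?_ ?_ <;> simp only [interior_Ici, Set.mem_Ioi]
    · exact fun x hx => (hg' x hx.ne').hasDerivWithinAt
    · exact fun x hx => (hg'' x hx.ne').hasDerivWithinAt
    · intro x hx
      linarith [one_sub_inv_le_log_of_pos hx]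
  have hmin : IsMinOn g (Set.Ici 0) 1 := by
    refine hconv.isMinOn_of_rightDeriv_eq_zero (by simp) ?_
    rw [(hg' 1 one_ne_zero).hasDerivWithinAt.derivWithin (uniqueDiffWithinAt_Ioi 1)]
    simp [g', klFun_one]
  have := hmin (Set.mem_Ici.mpr ht)
  simp [g, klFun_one] at this
  linarith

lemma mul_log_div_sub_add_eq_mul_klFun (a : ℝ) {b : ℝ} (hb : b ≠ 0) :
    a * log (a / b) - a + b = b * klFun (a / b) := by
  rw [klFun_apply]
  field_simp
  ring

lemma mul_log_div_sub_add_nonneg {a b : ℝ} (ha : 0 ≤ a) (hb : 0 ≤ b) (hab : b = 0 → a = 0) :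
    0 ≤ a * log (a / b) - a + b := by
  rcases hb.eq_or_lt with rfl | hb
  · simp [hab rfl]
  rw [mul_log_div_sub_add_eq_mul_klFun a hb.ne']
  exact mul_nonneg hb.le (klFun_nonneg (div_nonneg ha hb.le))

lemma sq_sub_le_mul_mul_log_div {a b : ℝ} (ha : 0 ≤ a) (hb : 0 ≤ b) (hab : b = 0 → a = 0) :
    (a - b) ^ 2 ≤ (2 * a + 4 * b) / 3 * (a * log (a / b) - a + b) := by
  rcases hb.eq_or_lt with rfl | hb
  · simp [hab rfl]
  rw [mul_log_div_sub_add_eq_mul_klFun a hb.ne']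
  calc (a - b) ^ 2 = b ^ 2 * (a / b - 1) ^ 2 := by field_simp
    _ ≤ b ^ 2 * ((2 * (a / b) + 4) * klFun (a / b) / 3) := by
      gcongr
      linarith [three_mul_sq_sub_one_le_mul_klFun (div_nonneg ha hb.le)]
    _ = (2 * a + 4 * b) / 3 * (b * klFun (a / b)) := by field_simp

theorem sq_sum_abs_sub_le_two_mul_sum_mul_log_div {ι : Type*} [Fintype ι] {μ ν : ι → ℝ}
    (hμ₀ : ∀ i, 0 ≤ μ i) (hν₀ : ∀ i, 0 ≤ ν i) (hμ₁ : ∑ i, μ i = 1) (hν₁ : ∑ i, ν i = 1)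
    (hac : ∀ i, ν i = 0 → μ i = 0) :
    (∑ i, |μ i - ν i|) ^ 2 ≤ 2 * ∑ i, μ i * log (μ i / ν i) :=
  calc (∑ i, |μ i - ν i|) ^ 2
      ≤ (∑ i, (2 * μ i + 4 * ν i) / 3) * ∑ i, (μ i * log (μ i / ν i) - μ i + ν i) :=
        sum_sq_le_sum_mul_sum_of_sq_le_mul _
          (fun i _ => by linarith [hμ₀ i, hν₀ i])
          (fun i _ => mul_log_div_sub_add_nonneg (hμ₀ i) (hν₀ i) (hac i))
          (fun i _ => (sq_abs _).trans_le (sq_sub_le_mul_mul_log_div (hμ₀ i) (hν₀ i) (hac i)))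
    _ = 2 * ∑ i, μ i * log (μ i / ν i) := by
        simp only [← sum_div, sum_add_distrib, sum_sub_distrib, ← mul_sum, hμ₁, hν₁]
        ring

lemma dft_sub (N : ℕ) (f g : Fin N → ℝ) (k : ℤ) :
    dft N f k - dft N g k = dft N (f - g) k := by
  simp only [dft, ← sum_sub_distrib, ← sub_mul, Pi.sub_apply, Complex.ofReal_sub]

lemma norm_dft_le (N : ℕ) (f : Fin N → ℝ) (k : ℤ) : ‖dft N f k‖ ≤ ∑ j, |f j| := by
  refine (norm_sum_le _ _).trans (sum_le_sum fun j _ => ?_)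
  have hphase : -2 * (π : ℂ) * Complex.I * ((j : ℕ) : ℂ) * (k : ℂ) / (N : ℂ)
      = ((-2 * π * (j : ℕ) * k / N : ℝ) : ℂ) * Complex.I := by
    push_cast
    ring
  rw [norm_mul, hphase, Complex.norm_exp_ofReal_mul_I, mul_one, Complex.norm_real,
    Real.norm_eq_abs]

lemma sum_Icc_one_div_sq_add_one_div_sq_le (N : ℕ) :
    ∑ k ∈ Icc 1 (N / 2 - 1), 1 / (k : ℝ) ^ 2 + 1 / (N : ℝ) ^ 2 ≤ π ^ 2 / 6 := by
  -- `M = max (N / 2) 1`, so that the last term also fits below the Basel sum when `N ≤ 1`.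
  set M := N / 2 - 1 + 1
  have hlast : 1 / (N : ℝ) ^ 2 ≤ 1 / (M : ℝ) ^ 2 := by
    rcases N.eq_zero_or_pos with rfl | hN
    · simp
    gcongr
    exact_mod_cast (by omega : M ≤ N)
  calc ∑ k ∈ Icc 1 (N / 2 - 1), 1 / (k : ℝ) ^ 2 + 1 / (N : ℝ) ^ 2
      ≤ ∑ k ∈ Icc 1 M, 1 / (k : ℝ) ^ 2 := by
        rw [sum_Icc_succ_top (by omega)]
        gcongr
    _ ≤ π ^ 2 / 6 := sum_le_hasSum _ (fun _ _ => by positivity) hasSum_zeta_two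

lemma F2_le (N : ℕ) (μ ν : Fin N → ℝ) :
    F2 N μ ν ≤ (∑ j, |μ j - ν j|) ^ 2 * (π ^ 2 / 6) := by
  have hdft (k : ℤ) : ‖dft N μ k - dft N ν k‖ ≤ ∑ j, |μ j - ν j| :=
    dft_sub N μ ν k ▸ norm_dft_le N (μ - ν) k
  calc F2 N μ ν
      ≤ ∑ k ∈ Icc 1 (N / 2 - 1), (∑ j, |μ j - ν j|) ^ 2 / (k : ℝ) ^ 2
          + (∑ j, |μ j - ν j|) ^ 2 / (N : ℝ) ^ 2 := by
        unfold F2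
        gcongr <;> exact hdft _
    _ ≤ (∑ j, |μ j - ν j|) ^ 2 * (π ^ 2 / 6) := by
        grw [← sum_Icc_one_div_sq_add_one_div_sq_le N, mul_add, mul_sum]
        simp only [mul_one_div, le_refl]

theorem fourier_le_kl_general (N : ℕ)
    (μ ν : Fin N → ℝ) (hμ : IsProb N μ) (hν : IsProb N ν)
    (hac : ∀ x, ν x = 0 → μ x = 0) :
    FD N μ ν ≤ (Real.pi / Real.sqrt 3) * Real.sqrt (KL N μ ν) := by
  have hpinsker : (∑ j, |μ j - ν j|) ^ 2 ≤ 2 * KL N μ ν :=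
    sq_sum_abs_sub_le_two_mul_sum_mul_log_div hμ.1 hν.1 hμ.2 hν.2 hac
  have hKL : 0 ≤ KL N μ ν := by linarith [(sq_nonneg _).trans hpinsker]
  rw [FD, sqrt_le_left (by positivity), mul_pow, div_pow, sq_sqrt hKL, sq_sqrt zero_le_three]
  calc F2 N μ ν ≤ (∑ j, |μ j - ν j|) ^ 2 * (π ^ 2 / 6) := F2_le N μ ν
    _ ≤ 2 * KL N μ ν * (π ^ 2 / 6) := by gcongr
    _ = π ^ 2 / 3 * KL N μ ν := by ring

/-- upper bound of the Fourier Discrepancy by the Kullback-Leibler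
divergence (when `μ` is absolutely continuous with respect to `ν`; otherwise
`KL(μ‖ν) = +∞` and the bound is trivial). -/
theorem fourier_le_kl (N : ℕ) (hN : 0 < N) (hNe : Even N)
    (μ ν : Fin N → ℝ) (hμ : IsProb N μ) (hν : IsProb N ν)
    (hac : ∀ x, ν x = 0 → μ x = 0) :
    FD N μ ν ≤ (Real.pi / Real.sqrt 3) * Real.sqrt (KL N μ ν) :=
  fourier_le_kl_general N μ ν hμ hν hac
end

section
/- For N even, the point d* = N/2 is a local minimum of the function g: [0,N] → ℝ defined by g(d) = Σ_{k=1}^{N/2-1} cos(2πdk/N)/k² + cos(πd)/N², i.e., g'(N/2) = 0 and g''(N/2) > 0. -/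
open Finset

/-- The function `g(d) = Σ_{k=1}^{N/2-1} cos(2πdk/N)/k² + cos(πd)/N²`. -/
noncomputable def gfun (N : ℕ) (d : ℝ) : ℝ :=
  (∑ k ∈ Finset.Icc 1 (N / 2 - 1), Real.cos (2 * Real.pi * d * (k : ℝ) / N) / (k : ℝ) ^ 2)
    + Real.cos (Real.pi * d) / (N : ℝ) ^ 2

/-!
`g` is a finite cosine sum, so it is smooth and its derivatives are computed termwise. At
`d = N/2` every phase `2πdk/N = kπ` and `πd = (N/2)π` is an integer multiple of `π`: all sines
vanish, so `g'(N/2) = 0`, and the cosines become signs, so `g''(N/2)` is an alternating sum,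
which evaluates to `π² (2 + (-1)^(N/2)) / N² > 0`. The second derivative test concludes.
-/

open Real

noncomputable def gfunDeriv (N : ℕ) (d : ℝ) : ℝ :=
  -(2 * π / N) * (∑ k ∈ Icc 1 (N / 2 - 1), sin (2 * π * d * k / N) / k)
    - π * sin (π * d) / (N : ℝ) ^ 2

noncomputable def gfunDeriv2 (N : ℕ) (d : ℝ) : ℝ :=
  -(2 * π / N) ^ 2 * (∑ k ∈ Icc 1 (N / 2 - 1), cos (2 * π * d * k / N))
    - π ^ 2 * cos (π * d) / (N : ℝ) ^ 2

lemma hasDerivAt_gfun (N : ℕ) (d : ℝ) : HasDerivAt (gfun N) (gfunDeriv N d) d := by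
  have hmode : ∀ k ∈ Icc 1 (N / 2 - 1), HasDerivAt (fun d : ℝ => cos (2 * π * d * k / N) / k ^ 2)
      (-(2 * π / N) * (sin (2 * π * d * k / N) / k)) d := by
    intro k hk
    have hk : (k : ℝ) ≠ 0 := by have := (mem_Icc.mp hk).1; positivity
    refine ((((hasDerivAt_id' d).const_mul (2 * π)).mul_const (k : ℝ)).div_const
      (N : ℝ)).cos.div_const ((k : ℝ) ^ 2) |>.congr_deriv ?_
    field_simp
  have hnyquist : HasDerivAt (fun d : ℝ => cos (π * d) / (N : ℝ) ^ 2)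
      (-π * sin (π * d) / (N : ℝ) ^ 2) d :=
    ((hasDerivAt_id' d).const_mul π).cos.div_const ((N : ℝ) ^ 2) |>.congr_deriv (by ring)
  refine (HasDerivAt.fun_sum hmode).add hnyquist |>.congr_deriv ?_
  rw [gfunDeriv, mul_sum]
  ring

lemma hasDerivAt_gfunDeriv (N : ℕ) (d : ℝ) : HasDerivAt (gfunDeriv N) (gfunDeriv2 N d) d := by
  have hmode : ∀ k ∈ Icc 1 (N / 2 - 1), HasDerivAt (fun d : ℝ => sin (2 * π * d * k / N) / k)
      (2 * π / N * cos (2 * π * d * k / N)) d := by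
    intro k hk
    have hk : (k : ℝ) ≠ 0 := by have := (mem_Icc.mp hk).1; positivity
    refine ((((hasDerivAt_id' d).const_mul (2 * π)).mul_const (k : ℝ)).div_const
      (N : ℝ)).sin.div_const (k : ℝ) |>.congr_deriv ?_
    field_simp
  have hnyquist : HasDerivAt (fun d : ℝ => π * sin (π * d) / (N : ℝ) ^ 2)
      (π ^ 2 * cos (π * d) / (N : ℝ) ^ 2) d :=
    (((hasDerivAt_id' d).const_mul π).sin.const_mul π).div_const ((N : ℝ) ^ 2) |>.congr_deriv
      (by ring)
  refine ((HasDerivAt.fun_sum hmode).const_mul (-(2 * π / N))).sub hnyquist |>.congr_deriv ?_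
  rw [gfunDeriv2, mul_sum, mul_sum]
  exact congrArg (· - _) (sum_congr rfl fun k _ => by ring)

lemma deriv_gfun (N : ℕ) : deriv (gfun N) = gfunDeriv N :=
  funext fun d => (hasDerivAt_gfun N d).deriv

lemma deriv_gfunDeriv (N : ℕ) : deriv (gfunDeriv N) = gfunDeriv2 N :=
  funext fun d => (hasDerivAt_gfunDeriv N d).deriv

lemma two_mul_sum_Icc_neg_one_pow {R : Type*} [CommRing R] (n : ℕ) :
    2 * ∑ k ∈ Icc 1 n, (-1 : R) ^ k = (-1) ^ n - 1 := by
  induction n with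
  | zero => simp
  | succ n ih =>
    rw [sum_Icc_succ_top (by omega), mul_add, ih, pow_succ]
    ring

lemma two_pi_mul_half_mul_div {x : ℝ} (hx : x ≠ 0) (k : ℝ) : 2 * π * (x / 2) * k / x = k * π := by
  field_simp

lemma pi_mul_half_of_even {N : ℕ} (hNe : Even N) : π * ((N : ℝ) / 2) = (N / 2 : ℕ) * π := by
  obtain ⟨M, rfl⟩ := hNe
  rw [← two_mul, Nat.mul_div_cancel_left M two_pos]
  push_cast
  ring

lemma gfunDeriv_half {N : ℕ} (hN : N ≠ 0) (hNe : Even N) : gfunDeriv N (N / 2) = 0 := by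
  simp [gfunDeriv, two_pi_mul_half_mul_div (Nat.cast_ne_zero.mpr hN), pi_mul_half_of_even hNe,
    sin_nat_mul_pi]

lemma gfunDeriv2_half {N : ℕ} (hN : N ≠ 0) (hNe : Even N) :
    gfunDeriv2 N (N / 2) = π ^ 2 * (2 + (-1) ^ (N / 2)) / (N : ℝ) ^ 2 := by
  have hN' : (N : ℝ) ≠ 0 := Nat.cast_ne_zero.mpr hN
  obtain ⟨m, hm⟩ : ∃ m, N / 2 = m + 1 := Nat.exists_eq_succ_of_ne_zero (by grind)
  have halternating := two_mul_sum_Icc_neg_one_pow (R := ℝ) m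
  simp only [gfunDeriv2, two_pi_mul_half_mul_div hN', pi_mul_half_of_even hNe, cos_nat_mul_pi, hm,
    Nat.add_sub_cancel]
  field_simp
  linear_combination (-2) * halternating

/-- `d* = N/2` is a local minimum of `g`, with `g'(N/2) = 0` and
`g''(N/2) > 0`. -/
theorem half_is_local_min (N : ℕ) (hN : 0 < N) (hNe : Even N) :
    IsLocalMin (gfun N) ((N : ℝ) / 2) ∧
    deriv (gfun N) ((N : ℝ) / 2) = 0 ∧
    0 < deriv (deriv (gfun N)) ((N : ℝ) / 2) := by
  have hd : deriv (gfun N) ((N : ℝ) / 2) = 0 := by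
    rw [deriv_gfun, gfunDeriv_half hN.ne' hNe]
  have hdd : 0 < deriv (deriv (gfun N)) ((N : ℝ) / 2) := by
    rw [deriv_gfun, deriv_gfunDeriv, gfunDeriv2_half hN.ne' hNe]
    have : 0 < 2 + (-1 : ℝ) ^ (N / 2) := by
      rcases neg_one_pow_eq_or ℝ (N / 2) with h | h <;> rw [h] <;> norm_num
    positivity
  exact ⟨isLocalMin_of_deriv_deriv_pos hdd hd (hasDerivAt_gfun N _).continuousAt, hd, hdd⟩
end
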